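/- arXiv:math/0502392 — 3 statements merged into one kernel-verified Lean document; each statement's English description precedes it below -/
import Mathlib

section
/- For any partition λ of n, the product of the hook lengths of all cells of λ divides n!. -/
/-- The `i`-th part (0-indexed) of a partition given as a list. -/
def partAt (l : List ℕ) (i : ℕ) : ℕ := l.getD i 0

/-- The `j`-th part (0-indexed) of the conjugate partition. -/
def conjAt (l : List ℕ) (j : ℕ) : ℕ :=
  ((Finset.range l.length).filter (fun i => j < partAt l i)).card

/-- The cells of the Ferrers diagram of `l` (0-indexed). -/
def cells (l : List ℕ) : Finset (ℕ × ℕ) :=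
  ((Finset.range l.length) ×ˢ (Finset.range (l.foldr max 0))).filter
    (fun p => p.2 < partAt l p.1)

/-- The hook length of the cell `(i,j)` (0-indexed):
`λ_i + λ'_j - i - j - 1` in 0-indexed terms equals `λ_i + λ'_j - i - j + 1` 1-indexed. -/
def hook (l : List ℕ) (i j : ℕ) : ℕ := partAt l i + conjAt l j - i - j - 1

namespace HookAux

open Finset

/-- beta numbers -/
def aval (l : List ℕ) (i : ℕ) : ℕ := partAt l i + (l.length - 1 - i)

variable {l : List ℕ}

lemma partAt_anti (hsort : l.Pairwise (· ≥ ·)) {i k : ℕ} (hik : i ≤ k) (hk : k < l.length) :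
    partAt l k ≤ partAt l i := by
  rcases eq_or_lt_of_le hik with rfl | hik
  · exact le_rfl
  · have hi : i < l.length := lt_trans hik hk
    have := List.pairwise_iff_get.mp hsort ⟨i, hi⟩ ⟨k, hk⟩ hik
    unfold partAt
    rw [List.getD_eq_getElem l 0 hi, List.getD_eq_getElem l 0 hk]
    simpa [List.get_eq_getElem] using this

lemma aval_strict_anti (hsort : l.Pairwise (· ≥ ·)) {i k : ℕ} (hik : i < k) (hk : k < l.length) :
    aval l k + (k - i) ≤ aval l i := by
  have h1 : partAt l k ≤ partAt l i := partAt_anti hsort (le_of_lt hik) hk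
  unfold aval
  omega

end HookAux

namespace HookAux
open Finset
variable {l : List ℕ}

/-- number of rows below `i` whose part is ≤ j -/
def dcount (l : List ℕ) (i j : ℕ) : ℕ :=
  ((Finset.Ioo i l.length).filter (fun k => partAt l k ≤ j)).card

lemma dcount_le (i j : ℕ) : dcount l i j ≤ l.length - 1 - i := by
  unfold dcount
  have h := card_filter_le (Finset.Ioo i l.length) (fun k => partAt l k ≤ j)
  rw [Nat.card_Ioo] at h
  omega

lemma dcount_mono (i : ℕ) {j j' : ℕ} (h : j ≤ j') : dcount l i j ≤ dcount l i j' := by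
  unfold dcount
  apply card_le_card
  apply Finset.monotone_filter_right
  intro k hk
  omega

lemma conjAt_eq (hsort : l.Pairwise (· ≥ ·)) {i j : ℕ} (hi : i < l.length)
    (hj : j < partAt l i) :
    conjAt l j = (i + 1) + ((l.length - 1 - i) - dcount l i j) := by
  unfold dcount
  have hsplit : Finset.range l.length = Finset.range (i+1) ∪ Finset.Ioo i l.length := by
    ext x
    simp only [mem_union, mem_range, mem_Ioo]
    omega
  have hdisj : Disjoint (Finset.range (i+1)) (Finset.Ioo i l.length) := by
    simp only [disjoint_left, mem_range, mem_Ioo]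
    omega
  have h2 : ((Finset.Ioo i l.length).filter (fun k => j < partAt l k)).card
      + ((Finset.Ioo i l.length).filter (fun k => partAt l k ≤ j)).card
      = l.length - 1 - i := by
    have := card_filter_add_card_filter_not (s := Finset.Ioo i l.length)
      (p := fun k => j < partAt l k)
    rw [Nat.card_Ioo] at this
    have hh : (Finset.Ioo i l.length).filter (fun k => ¬ j < partAt l k)
        = (Finset.Ioo i l.length).filter (fun k => partAt l k ≤ j) := by
      apply filter_congr; intro k hk; simp only [not_lt, eq_iff_iff]
    rw [hh] at this
    omega
  unfold conjAt
  rw [hsplit, filter_union, card_union_of_disjoint (disjoint_filter_filter hdisj)]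
  have h1 : (Finset.range (i+1)).filter (fun k => j < partAt l k) = Finset.range (i+1) := by
    apply filter_true_of_mem
    intro k hk
    simp only [mem_range] at hk
    exact lt_of_lt_of_le hj (partAt_anti hsort (by omega) hi)
  rw [h1, card_range]
  omega

lemma hook_eq (hsort : l.Pairwise (· ≥ ·)) {i j : ℕ} (hi : i < l.length)
    (hj : j < partAt l i) :
    hook l i j = aval l i - (j + dcount l i j) ∧ j + dcount l i j < aval l i := by
  have hc := conjAt_eq hsort hi hj
  have hd := dcount_le (l := l) i j
  unfold hook aval
  rw [hc]
  omega

end HookAux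

namespace HookAux
open Finset
variable {l : List ℕ}
lemma gval_ne_aval (hsort : l.Pairwise (· ≥ ·)) {i j k : ℕ} (hik : i < k) (hk : k < l.length)
    (hj : j < partAt l i) : j + dcount l i j ≠ aval l k := by
  have hak : aval l k = partAt l k + (l.length - 1 - k) := rfl
  rcases le_or_gt (partAt l k) j with hle | hgt
  · -- dcount ≥ m - k
    have hsub : Finset.Ico k l.length ⊆
        (Finset.Ioo i l.length).filter (fun x => partAt l x ≤ j) := by
      intro x hx
      simp only [mem_Ico] at hx
      simp only [mem_filter, mem_Ioo]
      exact ⟨⟨lt_of_lt_of_le hik hx.1, hx.2⟩,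
        le_trans (partAt_anti hsort hx.1 hx.2) hle⟩
    have hcard := card_le_card hsub
    rw [Nat.card_Ico] at hcard
    unfold dcount
    omega
  · -- dcount ≤ m - k - 1
    have hsub : (Finset.Ioo i l.length).filter (fun x => partAt l x ≤ j) ⊆
        Finset.Ioo k l.length := by
      intro x hx
      simp only [mem_filter, mem_Ioo] at hx
      simp only [mem_Ioo]
      refine ⟨?_, hx.1.2⟩
      by_contra hxk
      push_neg at hxk
      exact absurd (le_trans (partAt_anti hsort hxk hk) hx.2) (by omega)
    have hcard := card_le_card hsub
    rw [Nat.card_Ioo] at hcard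
    unfold dcount
    omega
end HookAux

namespace HookAux
open Finset Nat
variable {l : List ℕ}

lemma aval_lt (hsort : l.Pairwise (· ≥ ·)) {i k : ℕ} (hik : i < k) (hk : k < l.length) :
    aval l k < aval l i := by
  have := aval_strict_anti hsort hik hk
  omega

lemma prod_Icc_id (n : ℕ) : ∏ x ∈ Finset.Icc 1 n, x = n ! := by
  induction n with
  | zero => rfl
  | succ n ih =>
    rw [Finset.prod_Icc_succ_top (by omega), ih, Nat.factorial_succ, mul_comm]

/-- The row lemma: hooks of row `i` times the differences of beta numbers give `(a i)!`. -/
lemma row_lemma (hsort : l.Pairwise (· ≥ ·)) {i : ℕ} (hi : i < l.length) :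
    (∏ j ∈ Finset.range (partAt l i), hook l i j) *
      (∏ k ∈ Finset.Ioo i l.length, (aval l i - aval l k)) = (aval l i)! := by
  classical
  set m := l.length with hm
  set L := partAt l i with hL
  set A := aval l i with hA
  have hALe : L + (m - 1 - i) = A := rfl
  -- the two images
  set S : Finset ℕ := (Finset.range L).image (hook l i) with hS
  set T : Finset ℕ := (Finset.Ioo i m).image (fun k => A - aval l k) with hT
  have hookval : ∀ j < L, hook l i j = A - (j + dcount l i j) ∧ j + dcount l i j < A :=
    fun j hj => hook_eq hsort hi hj
  -- injectivity of hook on range L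
  have hg_mono : ∀ j j', j < j' → j' < L → j + dcount l i j < j' + dcount l i j' := by
    intro j j' hjj' hj'
    have := dcount_mono (l := l) i (le_of_lt hjj')
    omega
  have hinjS : Set.InjOn (hook l i) (Finset.range L) := by
    intro j hj j' hj' he
    simp only [coe_range, Set.mem_Iio] at hj hj'
    obtain ⟨hv, hb⟩ := hookval j hj
    obtain ⟨hv', hb'⟩ := hookval j' hj'
    rcases lt_trichotomy j j' with h | h | h
    · have := hg_mono j j' h hj'; omega
    · exact h
    · have := hg_mono j' j h hj; omega
  have hinjT : Set.InjOn (fun k => A - aval l k) (Finset.Ioo i m) := by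
    intro k hk k' hk' he
    simp only [coe_Ioo, Set.mem_Ioo] at hk hk'
    have h1 := aval_strict_anti hsort hk.1 hk.2
    have h2 := aval_strict_anti hsort hk'.1 hk'.2
    simp only at he
    rcases lt_trichotomy k k' with h | h | h
    · have := aval_strict_anti hsort h hk'.2; omega
    · exact h
    · have := aval_strict_anti hsort h hk.2; omega
  -- both inside Icc 1 A
  have hSsub : S ⊆ Finset.Icc 1 A := by
    intro x hx
    simp only [hS, mem_image, mem_range] at hx
    obtain ⟨j, hj, rfl⟩ := hx
    obtain ⟨hv, hb⟩ := hookval j hj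
    simp only [mem_Icc]
    omega
  have hTsub : T ⊆ Finset.Icc 1 A := by
    intro x hx
    simp only [hT, mem_image, mem_Ioo] at hx
    obtain ⟨k, hk, rfl⟩ := hx
    have := aval_strict_anti hsort hk.1 hk.2
    simp only [mem_Icc]
    omega
  -- disjoint
  have hdisj : Disjoint S T := by
    rw [disjoint_left]
    intro x hxS hxT
    simp only [hS, mem_image, mem_range] at hxS
    simp only [hT, mem_image, mem_Ioo] at hxT
    obtain ⟨j, hj, hjx⟩ := hxS
    obtain ⟨k, hk, hkx⟩ := hxT
    obtain ⟨hv, hb⟩ := hookval j hj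
    have hak := aval_strict_anti hsort hk.1 hk.2
    have : j + dcount l i j = aval l k := by omega
    exact gval_ne_aval hsort hk.1 hk.2 hj this
  -- cardinalities
  have hcardS : S.card = L := by
    rw [hS, Finset.card_image_of_injOn hinjS, card_range]
  have hcardT : T.card = m - 1 - i := by
    rw [hT, Finset.card_image_of_injOn hinjT, Nat.card_Ioo]
    omega
  have hunion : S ∪ T = Finset.Icc 1 A := by
    apply Finset.eq_of_subset_of_card_le (union_subset hSsub hTsub)
    rw [card_union_of_disjoint hdisj, hcardS, hcardT, Nat.card_Icc]
    omega
  calc (∏ j ∈ Finset.range L, hook l i j) * (∏ k ∈ Finset.Ioo i m, (A - aval l k))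
      = (∏ x ∈ S, x) * (∏ x ∈ T, x) := by
        rw [hS, hT, Finset.prod_image hinjS, Finset.prod_image hinjT]
    _ = ∏ x ∈ S ∪ T, x := (Finset.prod_union hdisj).symm
    _ = A ! := by rw [hunion, prod_Icc_id]

end HookAux

namespace HookAux
open Finset Nat
variable {l : List ℕ}

lemma sum_partAt (l : List ℕ) : ∑ i ∈ Finset.range l.length, partAt l i = l.sum := by
  induction l with
  | nil => simp [partAt]
  | cons x xs ih =>
    rw [List.length_cons, Finset.sum_range_succ']
    simp only [partAt, List.getD_cons_succ, List.getD_cons_zero, List.sum_cons]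
    rw [show (∑ i ∈ Finset.range xs.length, xs.getD i 0) = xs.sum from ih]
    omega

lemma sum_aval (l : List ℕ) :
    ∑ i ∈ Finset.range l.length, aval l i = l.sum + ∑ i ∈ Finset.range l.length, i := by
  unfold aval
  rw [Finset.sum_add_distrib, sum_partAt]
  congr 1
  rw [← Finset.sum_range_reflect]
  apply Finset.sum_congr rfl
  intro i hi
  simp only [Finset.mem_range] at hi
  omega

/-- key termwise divisibility -/
lemma key_term (l : List ℕ) (σ : Equiv.Perm (Fin l.length)) :
    (∏ i ∈ Finset.range l.length, (aval l i)!) ∣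
      (l.sum)! * ∏ i : Fin l.length, (aval l (σ i)).descFactorial i.val := by
  classical
  by_cases hgood : ∀ i : Fin l.length, (i : ℕ) ≤ aval l (σ i)
  · set b : Fin l.length → ℕ := fun i => aval l (σ i) - i.val with hb
    have hsum : ∑ i : Fin l.length, b i = l.sum := by
      rw [hb]
      rw [Finset.sum_tsub_distrib _ (fun i _ => hgood i)]
      rw [Equiv.sum_comp σ (fun i => aval l i.val)]
      rw [Fin.sum_univ_eq_sum_range (fun i => aval l i), sum_aval,
        Fin.sum_univ_eq_sum_range (fun i => (i : ℕ))]
      omega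
    have hmult := Nat.multinomial_spec Finset.univ b
    rw [hsum] at hmult
    refine ⟨Nat.multinomial Finset.univ b, ?_⟩
    calc (l.sum)! * ∏ i : Fin l.length, (aval l (σ i)).descFactorial i.val
        = ((∏ i : Fin l.length, (b i)!) * Nat.multinomial Finset.univ b)
          * ∏ i : Fin l.length, (aval l (σ i)).descFactorial i.val := by rw [hmult]
      _ = (∏ i : Fin l.length, ((b i)! * (aval l (σ i)).descFactorial i.val))
          * Nat.multinomial Finset.univ b := by
          rw [Finset.prod_mul_distrib]; ring
      _ = (∏ i : Fin l.length, (aval l (σ i))!) * Nat.multinomial Finset.univ b := by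
          congr 1
          apply Finset.prod_congr rfl
          intro i _
          exact Nat.factorial_mul_descFactorial (hgood i)
      _ = (∏ i ∈ Finset.range l.length, (aval l i)!) * Nat.multinomial Finset.univ b := by
          rw [Equiv.prod_comp σ (fun i => (aval l i.val)!),
            Fin.prod_univ_eq_prod_range (fun i => (aval l i)!)]
  · push_neg at hgood
    obtain ⟨i, hi⟩ := hgood
    have : (aval l (σ i)).descFactorial i.val = 0 :=
      Nat.descFactorial_eq_zero_iff_lt.mpr hi
    rw [Finset.prod_eq_zero (Finset.mem_univ i) this, mul_zero]
    exact dvd_zero _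

end HookAux

namespace HookAux
open Finset Nat Polynomial
variable {l : List ℕ}

lemma prod_Ioi_fin {M : Type*} [CommMonoid M] {m : ℕ} (i : Fin m) (g : ℕ → M) :
    ∏ j ∈ Finset.Ioi i, g j.val = ∏ k ∈ Finset.Ioo i.val m, g k := by
  refine Finset.prod_bij' (fun (j : Fin m) (_ : j ∈ Finset.Ioi i) => (j : ℕ))
    (fun k (hk : k ∈ Finset.Ioo i.val m) => (⟨k, (Finset.mem_Ioo.mp hk).2⟩ : Fin m))
    ?_ ?_ ?_ ?_ ?_
  · intro j hj
    simp only [Finset.mem_Ioi] at hj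
    simp only [Finset.mem_Ioo]
    exact ⟨hj, j.isLt⟩
  · intro k hk
    simp only [Finset.mem_Ioo] at hk
    simp only [Finset.mem_Ioi, Fin.lt_def]
    exact hk.1
  · intro j hj; rfl
  · intro k hk; rfl
  · intro j hj; rfl

lemma stepC (hsort : l.Pairwise (· ≥ ·)) :
    (∏ i ∈ Finset.range l.length, (aval l i)!) ∣
      (l.sum)! * ∏ i ∈ Finset.range l.length, ∏ k ∈ Finset.Ioo i l.length,
        (aval l i - aval l k) := by
  classical
  set m := l.length with hm
  set v : Fin m → ℤ := fun i => (aval l i.val : ℤ) with hv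
  set A : ℕ := ∏ i ∈ Finset.range m, (aval l i)! with hA
  set D : ℕ := ∏ i ∈ Finset.range m, ∏ k ∈ Finset.Ioo i m, (aval l i - aval l k) with hD
  -- step 1: vandermonde det equals descFactorial matrix det
  have h1 : (Matrix.vandermonde v).det =
      (Matrix.of fun i j : Fin m => ((aval l i.val).descFactorial j.val : ℤ)).det := by
    rw [Matrix.det_eval_matrixOfPolynomials_eq_det_vandermonde v
      (fun i => descPochhammer ℤ i.val)
      (fun i => descPochhammer_natDegree ℤ i.val)
      (fun i => monic_descPochhammer ℤ i.val)]
    congr 1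
    ext i j
    simp only [Matrix.of_apply, hv]
    rw [descPochhammer_eval_eq_descFactorial]
  -- step 2: A divides n! * det of descFactorial matrix
  have h2 : (A : ℤ) ∣ ((l.sum)! : ℤ) * (Matrix.vandermonde v).det := by
    rw [h1, Matrix.det_apply', Finset.mul_sum]
    apply Finset.dvd_sum
    intro σ _
    have hprod : (∏ i : Fin m, (Matrix.of fun i j : Fin m =>
        ((aval l i.val).descFactorial j.val : ℤ)) (σ i) i) =
        ((∏ i : Fin m, (aval l (σ i).val).descFactorial i.val : ℕ) : ℤ) := by
      push_cast
      rfl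
    rw [hprod, mul_left_comm]
    exact Dvd.dvd.mul_left (by exact_mod_cast Int.natCast_dvd_natCast.mpr (key_term l σ)) _
  -- step 3: relate vandermonde det to D up to sign
  have hsub : ∀ (i j : Fin m), (i : ℕ) < (j : ℕ) →
      v i - v j = ((aval l i.val - aval l j.val : ℕ) : ℤ) := by
    intro i j hij
    have := aval_lt hsort hij j.isLt
    simp only [hv]
    omega
  have h3 : ((l.sum)! * D : ℤ) =
      (∏ i : Fin m, (-1 : ℤ) ^ (Finset.Ioi i).card) *
        (((l.sum)! : ℤ) * (Matrix.vandermonde v).det) := by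
    rw [Matrix.det_vandermonde]
    rw [mul_left_comm, ← Finset.prod_mul_distrib]
    have : ∀ i : Fin m, ((-1 : ℤ) ^ (Finset.Ioi i).card * ∏ j ∈ Finset.Ioi i, (v j - v i))
        = ((∏ k ∈ Finset.Ioo i.val m, (aval l i.val - aval l k) : ℕ) : ℤ) := by
      intro i
      rw [← Finset.prod_const, ← Finset.prod_mul_distrib]
      rw [Nat.cast_prod, ← prod_Ioi_fin i (fun k => ((aval l i.val - aval l k : ℕ) : ℤ))]
      apply Finset.prod_congr rfl
      intro j hj
      simp only [Finset.mem_Ioi] at hj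
      rw [← hsub i j hj]
      ring
    simp only [this]
    congr 1
    rw [Nat.cast_prod]
    exact (Fin.prod_univ_eq_prod_range
      (fun i => ((∏ k ∈ Finset.Ioo i m, (aval l i - aval l k) : ℕ) : ℤ)) m).symm
  -- combine
  have h4 : (A : ℤ) ∣ ((l.sum)! * D : ℤ) := by
    rw [h3]
    exact Dvd.dvd.mul_left h2 _
  exact_mod_cast h4

end HookAux

namespace HookAux
open Finset Nat
variable {l : List ℕ}

lemma le_foldr_max {x : ℕ} (hx : x ∈ l) : x ≤ l.foldr max 0 := by
  induction l with
  | nil => cases hx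
  | cons y ys ih =>
    rcases List.mem_cons.mp hx with rfl | h
    · simp [List.foldr]
    · simp only [List.foldr_cons]
      exact le_trans (ih h) (le_max_right _ _)

lemma partAt_le_max {i : ℕ} (hi : i < l.length) : partAt l i ≤ l.foldr max 0 := by
  apply le_foldr_max
  unfold partAt
  rw [List.getD_eq_getElem l 0 hi]
  exact List.getElem_mem hi

lemma cells_prod (l : List ℕ) :
    (∏ u ∈ cells l, hook l u.1 u.2) =
      ∏ i ∈ Finset.range l.length, ∏ j ∈ Finset.range (partAt l i), hook l i j := by
  classical
  unfold cells
  rw [Finset.prod_filter, Finset.prod_product]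
  apply Finset.prod_congr rfl
  intro i hi
  simp only [Finset.mem_range] at hi
  rw [← Finset.prod_filter]
  congr 1
  ext j
  simp only [Finset.mem_filter, Finset.mem_range]
  constructor
  · rintro ⟨_, h⟩; exact h
  · intro h; exact ⟨lt_of_lt_of_le h (partAt_le_max hi), h⟩

end HookAux


/-- For any partition λ of n, the product of the hook lengths of all cells of λ
divides n!. -/
theorem stmt0 (l : List ℕ) (hsort : l.Pairwise (· ≥ ·)) (hpos : ∀ x ∈ l, 0 < x) :
    (∏ u ∈ cells l, hook l u.1 u.2) ∣ (l.sum).factorial := by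
  classical
  open HookAux Finset Nat in
  set m := l.length with hm
  set H := ∏ u ∈ cells l, hook l u.1 u.2 with hH
  set D : ℕ := ∏ i ∈ Finset.range m, ∏ k ∈ Finset.Ioo i m, (aval l i - aval l k) with hD
  have hrow : H * D = ∏ i ∈ Finset.range m, (aval l i)! := by
    rw [hH, cells_prod l, hD, ← Finset.prod_mul_distrib]
    apply Finset.prod_congr rfl
    intro i hi
    simp only [Finset.mem_range] at hi
    exact row_lemma hsort hi
  have hdvd : (∏ i ∈ Finset.range m, (aval l i)!) ∣ (l.sum)! * D := stepC hsort
  rw [← hrow] at hdvd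
  have hDpos : 0 < D := by
    rw [hD]
    apply Finset.prod_pos
    intro i hi
    apply Finset.prod_pos
    intro k hk
    simp only [Finset.mem_Ioo] at hk
    have := HookAux.aval_lt hsort hk.1 hk.2
    omega
  exact (Nat.mul_dvd_mul_iff_right hDpos).mp hdvd
end

section
/- Fix positive integers d, e, k, a partition λ ⊆ (d^d) and a partition μ ⊆ (e^e). The determinant det(M(h)) of the (d+e)×(d+e) matrix M(h) whose (i,j) entry is binom(λ_j − j + h + d, λ_j − j − e + i) for 1 ≤ j ≤ d, and binom(k + μ_{j−d} + e − (j−d), k − 1 + i) for d < j ≤ d+e, is, as a function of h, equal to (1/|λ|!)·p(h) for a polynomial p with integer coefficients of degree |λ|. -/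
open Polynomial Finset

/-- The binomial coefficient `binom(X + c, s)` as a polynomial in `X` over ℚ,
for an integer lower index `s` (zero if `s < 0`). -/
noncomputable def binomPoly (c s : ℤ) : Polynomial ℚ :=
  if 0 ≤ s then
    Polynomial.C (((s.toNat).factorial : ℚ))⁻¹ *
      ∏ t ∈ Finset.range s.toNat, (Polynomial.X + Polynomial.C ((c : ℚ) - (t : ℚ)))
  else 0

/-- `1/m!` for an integer `m`, zero when `m < 0`. -/
noncomputable def invFact (m : ℤ) : ℚ := if 0 ≤ m then ((m.toNat).factorial : ℚ)⁻¹ else 0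

lemma invFact_of_neg {m : ℤ} (h : m < 0) : invFact m = 0 := by
  simp [invFact, not_le.mpr h]

lemma invFact_ne_zero {m : ℤ} (h : 0 ≤ m) : invFact m ≠ 0 := by
  simp only [invFact, if_pos h]
  exact inv_ne_zero (by positivity)

lemma invFact_sub_one (m : ℤ) : invFact (m - 1) = m * invFact m := by
  rcases lt_trichotomy m 0 with h | h | h
  · rw [invFact_of_neg h, invFact_of_neg (by omega), mul_zero]
  · subst h
    rw [invFact_of_neg (by norm_num)]
    push_cast; ring
  · have h1 : (0:ℤ) ≤ m - 1 := by omega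
    rw [invFact, invFact, if_pos h1, if_pos h.le]
    have hm : m.toNat = (m - 1).toNat + 1 := by omega
    have hc : (((m - 1).toNat : ℚ) + 1) = (m : ℚ) := by
      have h2 : ((m-1).toNat : ℤ) = m - 1 := Int.toNat_of_nonneg h1
      have h3 : (((m-1).toNat : ℤ) : ℚ) = ((m : ℚ) - 1) := by exact_mod_cast h2
      push_cast at h3 ⊢; linarith
    rw [hm, Nat.factorial_succ]
    push_cast
    rw [hc, mul_inv]
    have hmne : (m : ℚ) ≠ 0 := by exact_mod_cast h.ne'
    field_simp

lemma invFact_prod_range (c : ℕ) : ∀ (m : ℤ),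
    (∏ t ∈ Finset.range c, ((m:ℚ) + 1 + t)) * invFact (m + c) = invFact m := by
  induction c with
  | zero => simp
  | succ c ih =>
    intro m
    rw [Finset.prod_range_succ]
    have h1 : invFact (m + c) = ((m : ℚ) + c + 1) * invFact (m + (c+1:ℕ)) := by
      have h2 := invFact_sub_one (m + c + 1)
      rw [show m + (c:ℤ) + 1 - 1 = m + c by ring] at h2
      rw [h2]
      have : ((m + (c:ℤ) + 1 : ℤ) : ℚ) = (m:ℚ) + c + 1 := by push_cast; ring
      rw [this]
      congr 2
      push_cast; ring
    calc (∏ t ∈ Finset.range c, ((m:ℚ) + 1 + t)) * ((m:ℚ) + 1 + c) * invFact (m + (c+1:ℕ))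
        = (∏ t ∈ Finset.range c, ((m:ℚ) + 1 + t)) * (((m:ℚ) + c + 1) * invFact (m + (c+1:ℕ))) := by
          ring
      _ = (∏ t ∈ Finset.range c, ((m:ℚ) + 1 + t)) * invFact (m + c) := by rw [← h1]
      _ = invFact m := ih m

lemma minSum : ∀ (T : Finset ℕ), ∑ i ∈ Finset.range T.card, i ≤ ∑ t ∈ T, t := by
  intro T
  induction T using Finset.strongInduction with
  | _ T ih =>
    rcases T.eq_empty_or_nonempty with rfl | hne
    · simp
    · set m := T.max' hne with hm
      have hmem : m ∈ T := T.max'_mem hne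
      have hsub : T ⊆ Finset.range (m+1) := by
        intro x hx
        simp only [Finset.mem_range]
        exact Nat.lt_succ_of_le (T.le_max' x hx)
      have hcard : T.card ≤ m + 1 := by
        simpa using Finset.card_le_card hsub
      have herase : T.erase m ⊂ T := Finset.erase_ssubset hmem
      have ih1 := ih _ herase
      have hce : (T.erase m).card = T.card - 1 := by
        rw [Finset.card_erase_of_mem hmem]
      have hc1 : 1 ≤ T.card := Finset.card_pos.mpr hne
      have hsum : ∑ t ∈ T, t = m + ∑ t ∈ T.erase m, t := (Finset.add_sum_erase T _ hmem).symm
      have hr : ∑ i ∈ Finset.range T.card, i = (∑ i ∈ Finset.range (T.card - 1), i) + (T.card - 1) := by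
        have : T.card = (T.card - 1) + 1 := by omega
        rw [this, Finset.sum_range_succ]
        congr 1 <;> omega
      rw [hsum, hr]
      rw [hce] at ih1
      omega

lemma sum_fin_inj_le (n : ℕ) (f : Fin n → ℕ) (hf : Function.Injective f) :
    ∑ i ∈ Finset.range n, i ≤ ∑ j, f j := by
  have h1 : (Finset.univ.image f).card = n := by
    rw [Finset.card_image_of_injective _ hf, Finset.card_univ, Fintype.card_fin]
  have h2 : ∑ t ∈ Finset.univ.image f, t = ∑ j, f j :=
    Finset.sum_image (fun x _ y _ h => hf h)
  calc ∑ i ∈ Finset.range n, i = ∑ i ∈ Finset.range (Finset.univ.image f).card, i := by rw [h1]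
    _ ≤ ∑ t ∈ Finset.univ.image f, t := minSum _
    _ = ∑ j, f j := h2

lemma sum_fin_inj_lt (n : ℕ) (f : Fin n → ℕ) (hf : Function.Injective f)
    (j0 : Fin n) (hj0 : n ≤ f j0) : ∑ i ∈ Finset.range n, i < ∑ j, f j := by
  have hn : 1 ≤ n := by have := j0.isLt; omega
  have key : ∑ i ∈ Finset.range (n-1), i ≤ ∑ j ∈ Finset.univ.erase j0, f j := by
    have h1 : ((Finset.univ.erase j0).image f).card = n - 1 := by
      rw [Finset.card_image_of_injective _ hf, Finset.card_erase_of_mem (Finset.mem_univ _),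
        Finset.card_univ, Fintype.card_fin]
    have h2 : ∑ t ∈ (Finset.univ.erase j0).image f, t = ∑ j ∈ Finset.univ.erase j0, f j :=
      Finset.sum_image (fun x _ y _ h => hf h)
    calc ∑ i ∈ Finset.range (n-1), i
        = ∑ i ∈ Finset.range ((Finset.univ.erase j0).image f).card, i := by rw [h1]
      _ ≤ _ := minSum _
      _ = _ := h2
  have hsum : ∑ j, f j = f j0 + ∑ j ∈ Finset.univ.erase j0, f j :=
    (Finset.add_sum_erase _ _ (Finset.mem_univ _)).symm
  have hr : ∑ i ∈ Finset.range n, i = (∑ i ∈ Finset.range (n - 1), i) + (n - 1) := by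
    have : n = (n - 1) + 1 := by omega
    rw [this, Finset.sum_range_succ]
    congr 1 <;> omega
  omega

section inj
variable {d e : ℕ}

/-- Upper bound on the sum of values of an injection `Fin d → Fin (d+e)`. -/
lemma sum_inj_upper (g : Fin d → Fin (d+e)) (hg : Function.Injective g) :
    ∑ j, (g j : ℕ) ≤ d * e + ∑ i ∈ Finset.range d, i := by
  set f : Fin d → ℕ := fun j => d + e - 1 - (g j : ℕ) with hf
  have hfi : Function.Injective f := by
    intro a b hab
    apply hg
    have ha := (g a).isLt
    have hb := (g b).isLt
    have : (g a : ℕ) = (g b : ℕ) := by simp only [hf] at hab; omega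
    exact Fin.ext this
  have h1 := sum_fin_inj_le d f hfi
  have h2 : ∑ j, ((g j : ℕ) + f j) = ∑ j : Fin d, (d + e - 1) := by
    apply Finset.sum_congr rfl
    intro j _
    have := (g j).isLt
    simp only [hf]; omega
  rw [Finset.sum_add_distrib, Finset.sum_const, Finset.card_univ, Fintype.card_fin,
    smul_eq_mul] at h2
  have h3 : 2 * ∑ i ∈ Finset.range d, i = d * (d - 1) := by
    rw [← Finset.sum_range_id_mul_two d]; ring
  rcases Nat.eq_zero_or_pos d with rfl | hd
  · simp
  · have hde : d * (d + e - 1) = d * (d - 1) + d * e := by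
      have : d + e - 1 = (d - 1) + e := by omega
      rw [this, Nat.mul_add]
    omega

lemma sum_inj_strict (g : Fin d → Fin (d+e)) (hg : Function.Injective g)
    (j0 : Fin d) (hj0 : (g j0 : ℕ) < e) :
    ∑ j, (g j : ℕ) < d * e + ∑ i ∈ Finset.range d, i := by
  set f : Fin d → ℕ := fun j => d + e - 1 - (g j : ℕ) with hf
  have hfi : Function.Injective f := by
    intro a b hab
    apply hg
    have ha := (g a).isLt
    have hb := (g b).isLt
    have : (g a : ℕ) = (g b : ℕ) := by simp only [hf] at hab; omega
    exact Fin.ext this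
  have hd : 0 < d := by have := j0.isLt; omega
  have h1 := sum_fin_inj_lt d f hfi j0 (by simp only [hf]; omega)
  have h2 : ∑ j, ((g j : ℕ) + f j) = ∑ j : Fin d, (d + e - 1) := by
    apply Finset.sum_congr rfl
    intro j _
    have := (g j).isLt
    simp only [hf]; omega
  rw [Finset.sum_add_distrib, Finset.sum_const, Finset.card_univ, Fintype.card_fin,
    smul_eq_mul] at h2
  have h3 : 2 * ∑ i ∈ Finset.range d, i = d * (d - 1) := by
    rw [← Finset.sum_range_id_mul_two d]; ring
  have hde : d * (d + e - 1) = d * (d - 1) + d * e := by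
    have : d + e - 1 = (d - 1) + e := by omega
    rw [this, Nat.mul_add]
  omega

/-- If an injection `Fin d → Fin (d+e)` takes only values `≥ e`, its sum of values
is exactly the maximum. -/
lemma sum_inj_top (g : Fin d → Fin (d+e)) (hg : Function.Injective g)
    (htop : ∀ j, e ≤ (g j : ℕ)) :
    ∑ j, (g j : ℕ) = d * e + ∑ i ∈ Finset.range d, i := by
  refine le_antisymm (sum_inj_upper g hg) ?_
  set h : Fin d → ℕ := fun j => (g j : ℕ) - e with hh
  have hhi : Function.Injective h := by
    intro a b hab
    apply hg
    have ha := htop a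
    have hb := htop b
    have : (g a : ℕ) = (g b : ℕ) := by simp only [hh] at hab; omega
    exact Fin.ext this
  have h1 := sum_fin_inj_le d h hhi
  have h2 : ∑ j, (g j : ℕ) = ∑ j, (h j + e) := by
    apply Finset.sum_congr rfl
    intro j _
    have := htop j
    simp only [hh]; omega
  rw [h2, Finset.sum_add_distrib, Finset.sum_const, Finset.card_univ, Fintype.card_fin,
    smul_eq_mul]
  omega

end inj

lemma coeff_prod_budget {ι : Type*} (s : Finset ι) (f : ι → Polynomial ℚ) (n : ι → ℕ)
    (h : ∀ i ∈ s, (f i).natDegree ≤ n i) :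
    (∏ i ∈ s, f i).coeff (∑ i ∈ s, n i) = ∏ i ∈ s, (f i).coeff (n i) := by
  induction s using Finset.cons_induction with
  | empty => simp
  | cons a s ha ih =>
    rw [Finset.prod_cons, Finset.sum_cons, Polynomial.coeff_mul_add_eq_of_natDegree_le
      (h a (Finset.mem_cons_self a s))
      (le_trans (Polynomial.natDegree_prod_le s f)
        (Finset.sum_le_sum (fun i hi => h i (Finset.mem_cons_of_mem hi)))),
      ih (fun i hi => h i (Finset.mem_cons_of_mem hi)), Finset.prod_cons]

lemma binomPoly_of_neg {c s : ℤ} (h : s < 0) : binomPoly c s = 0 := by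
  simp [binomPoly, not_le.mpr h]

lemma prod_X_add_C_monic (n : ℕ) (a : ℕ → ℚ) :
    (∏ t ∈ Finset.range n, (Polynomial.X + Polynomial.C (a t))).Monic :=
  Polynomial.monic_prod_of_monic _ _ (fun t _ => Polynomial.monic_X_add_C (a t))

lemma prod_X_add_C_natDegree (n : ℕ) (a : ℕ → ℚ) :
    (∏ t ∈ Finset.range n, (Polynomial.X + Polynomial.C (a t))).natDegree = n := by
  rw [Polynomial.natDegree_prod_of_monic _ _ (fun t _ => Polynomial.monic_X_add_C (a t))]
  simp [Polynomial.natDegree_X_add_C]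

lemma binomPoly_natDegree_le (c s : ℤ) : (binomPoly c s).natDegree ≤ s.toNat := by
  rcases lt_or_ge s 0 with h | h
  · rw [binomPoly_of_neg h]; simp
  · rw [binomPoly, if_pos h]
    refine le_trans (Polynomial.natDegree_C_mul_le _ _) ?_
    rw [prod_X_add_C_natDegree]

lemma binomPoly_coeff_toNat (c s : ℤ) : (binomPoly c s).coeff s.toNat = invFact s := by
  rcases lt_or_ge s 0 with h | h
  · rw [binomPoly_of_neg h, invFact_of_neg h]; simp
  · rw [binomPoly, if_pos h, Polynomial.coeff_C_mul]
    have hm := prod_X_add_C_monic s.toNat (fun t => (c : ℚ) - t)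
    have hd := prod_X_add_C_natDegree s.toNat (fun t => (c : ℚ) - t)
    have : (∏ t ∈ Finset.range s.toNat,
        (Polynomial.X + Polynomial.C ((c:ℚ) - t))).coeff s.toNat = 1 := by
      have h1 := hm.coeff_natDegree
      rw [hd] at h1
      exact h1
    rw [this, mul_one, invFact, if_pos h]

/-- Key lemma: the determinant of the matrix `(1/(w j + i)!)` is nonzero for
injective `w` with `w j + n - 1 ≥ 0`. -/
lemma det_invFact_ne_zero (n : ℕ) (w : Fin n → ℤ) (hw : Function.Injective w)
    (hnn : ∀ j, 0 ≤ w j + (n : ℤ) - 1) :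
    (Matrix.of fun i j : Fin n => invFact (w j + (i:ℕ))).det ≠ 0 := by
  rcases Nat.eq_zero_or_pos n with rfl | hn
  · simp [Matrix.det_fin_zero]
  set M : Matrix (Fin n) (Fin n) ℚ := Matrix.of fun i j : Fin n => invFact (w j + (i:ℕ)) with hM
  set F : Fin n → ℚ := fun j => (((w j + (n:ℤ) - 1).toNat).factorial : ℚ) with hF
  have hFne : ∀ j, F j ≠ 0 := fun j => by positivity
  -- M * diagonal F has entries which are evaluations of monic polynomials
  set P : Fin n → Polynomial ℚ := fun i =>
    ∏ t ∈ Finset.range (n - 1 - (i:ℕ)), (Polynomial.X + Polynomial.C (((i:ℕ):ℚ) + 1 + t)) with hP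
  have hMD : ∀ i j, (M * Matrix.diagonal F) i j = (P i).eval ((w j : ℚ)) := by
    intro i j
    rw [Matrix.mul_diagonal]
    have hiw := invFact_prod_range (n - 1 - (i:ℕ)) (w j + (i:ℕ))
    have hcast : w j + ((i:ℕ):ℤ) + ((n - 1 - (i:ℕ) : ℕ) : ℤ) = w j + (n:ℤ) - 1 := by
      have := i.isLt; push_cast; omega
    rw [hcast] at hiw
    have heval : (P i).eval ((w j : ℚ)) =
        ∏ t ∈ Finset.range (n - 1 - (i:ℕ)), ((w j : ℚ) + ((i:ℕ):ℚ) + 1 + t) := by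
      rw [hP]
      simp only [Polynomial.eval_prod, Polynomial.eval_add, Polynomial.eval_X, Polynomial.eval_C]
      apply Finset.prod_congr rfl; intro t _; ring
    rw [heval]
    have h2 : ∏ t ∈ Finset.range (n - 1 - (i:ℕ)), ((w j:ℚ) + ((i:ℕ):ℚ) + 1 + t)
        = ∏ t ∈ Finset.range (n - 1 - (i:ℕ)), (((w j + (i:ℕ) : ℤ):ℚ) + 1 + t) := by
      apply Finset.prod_congr rfl; intro t _; push_cast; ring
    -- invFact (w j + n - 1) = 1 / F j
    have h3 : invFact (w j + (n:ℤ) - 1) = (F j)⁻¹ := by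
      rw [invFact, if_pos (hnn j), hF]
    rw [hM]
    simp only [Matrix.of_apply]
    rw [← hiw, h3, h2]
    field_simp
    exact mul_div_cancel_right₀ _ (hFne j)
  -- express det of (M * diagonal F) via Vandermonde
  set x : Fin n → ℚ := fun j => ((w j : ℤ) : ℚ) with hx
  have hxinj : Function.Injective x := by
    intro a b hab
    simp only [hx] at hab
    have : w a = w b := by exact_mod_cast hab
    exact hw this
  set Q : Fin n → Polynomial ℚ := fun i => P i.rev with hQ
  have hQdeg : ∀ i : Fin n, (Q i).natDegree = (i : ℕ) := by
    intro i
    rw [hQ]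
    simp only
    rw [hP]
    simp only
    rw [prod_X_add_C_natDegree]
    rw [Fin.val_rev]
    have := i.isLt; omega
  have hQmonic : ∀ i : Fin n, (Q i).Monic := fun i => prod_X_add_C_monic _ _
  have hvd : (Matrix.vandermonde x).det =
      (Matrix.of fun a b => (Q b).eval (x a)).det :=
    Matrix.det_eval_matrixOfPolynomials_eq_det_vandermonde x Q hQdeg hQmonic
  have hvne : (Matrix.vandermonde x).det ≠ 0 := Matrix.det_vandermonde_ne_zero_iff.mpr hxinj
  -- relate (of fun a b => (Q b).eval (x a)) to M * diagonal F
  have hrel : (Matrix.of fun a b : Fin n => (Q b).eval (x a)) =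
      Matrix.transpose ((M * Matrix.diagonal F).submatrix (⇑(Fin.revPerm : Equiv.Perm (Fin n))) id) := by
    ext a b
    simp only [Matrix.transpose_apply, Matrix.submatrix_apply, Matrix.of_apply, id_eq]
    rw [hMD]
    rfl
  have hdr : (((M * Matrix.diagonal F).submatrix (⇑(Fin.revPerm : Equiv.Perm (Fin n))) id)).det
      = ((Equiv.Perm.sign (Fin.revPerm : Equiv.Perm (Fin n)) : ℤ) : ℚ) * ((M * Matrix.diagonal F)).det := by
    exact_mod_cast Matrix.det_permute _ _
  have hMDdet : ((M * Matrix.diagonal F)).det = M.det * ∏ j, F j := by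
    rw [Matrix.det_mul, Matrix.det_diagonal]
  intro hMdet
  rw [hrel, Matrix.det_transpose, hdr, hMDdet, hMdet, zero_mul, mul_zero] at hvd
  exact hvne hvd

/-- Lemma 5.2 of the paper: for partitions `λ ⊆ (d^d)` and `μ ⊆ (e^e)` and a
positive integer `k`, the determinant of the `(d+e)×(d+e)` matrix with entries
`binom(λ_j − j + h + d, λ_j − j − e + i)` for `1 ≤ j ≤ d` and
`binom(k + μ_{j−d} + e − (j−d), k − 1 + i)` for `d < j ≤ d+e`, as a function
of `h`, equals `(1/|λ|!)·p(h)` for a polynomial `p ∈ ℤ[h]` of degree `|λ|`. -/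
theorem stmt9 (d e k : ℕ) (hd : 0 < d) (he : 0 < e) (hk : 0 < k)
    (lam : Fin d → ℕ) (mu : Fin e → ℕ)
    (hlam : Antitone lam) (hlamle : ∀ j, lam j ≤ d)
    (hmu : Antitone mu) (hmule : ∀ j, mu j ≤ e) :
    ∃ p : Polynomial ℤ,
      p.natDegree = (∑ j, lam j) ∧
      Matrix.det (Matrix.of fun i j : Fin (d + e) =>
        if h : (j : ℕ) < d then
          binomPoly ((lam ⟨j, h⟩ : ℤ) - ((j : ℕ) + 1) + d)
            ((lam ⟨j, h⟩ : ℤ) - ((j : ℕ) + 1) - e + ((i : ℕ) + 1))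
        else
          Polynomial.C
            ((Nat.choose (k + mu ⟨(j : ℕ) - d, by have := j.isLt; omega⟩ + e - ((j : ℕ) - d + 1))
              (k - 1 + ((i : ℕ) + 1)) : ℚ)))
        = Polynomial.C ((((∑ j, lam j).factorial : ℚ))⁻¹) * p.map (Int.castRingHom ℚ) := by
  classical
  set N := ∑ j, lam j with hN
  set A : Matrix (Fin (d + e)) (Fin (d + e)) (Polynomial ℚ) := Matrix.of fun i j : Fin (d + e) =>
        if h : (j : ℕ) < d then
          binomPoly ((lam ⟨j, h⟩ : ℤ) - ((j : ℕ) + 1) + d)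
            ((lam ⟨j, h⟩ : ℤ) - ((j : ℕ) + 1) - e + ((i : ℕ) + 1))
        else
          Polynomial.C
            ((Nat.choose (k + mu ⟨(j : ℕ) - d, by have := j.isLt; omega⟩ + e - ((j : ℕ) - d + 1))
              (k - 1 + ((i : ℕ) + 1)) : ℚ)) with hA
  -- abbreviations
  set y : Fin d → ℤ := fun j => (lam j : ℤ) - ((j : ℕ) + 1) with hy
  set sv : Fin (d + e) → Fin d → ℤ := fun i j => y j - e + ((i : ℕ) + 1) with hsv
  -- entry lemmas
  have hAcast : ∀ (i : Fin (d + e)) (j : Fin d),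
      A i (Fin.castAdd e j) = binomPoly (y j + d) (sv i j) := by
    intro i j
    have hj : ((Fin.castAdd e j : Fin (d + e)) : ℕ) < d := by
      simp only [Fin.coe_castAdd]; exact j.isLt
    show (if h : _ then _ else _) = _
    rw [dif_pos hj]
    simp only [Fin.coe_castAdd, Fin.eta, hy, hsv]
  have hAnat : ∀ (i : Fin (d + e)) (j : Fin e),
      A i (Fin.natAdd d j) = Polynomial.C
        ((Nat.choose (k + mu j + e - ((j : ℕ) + 1)) (k - 1 + ((i : ℕ) + 1)) : ℚ)) := by
    intro i j
    have hj : ¬ ((Fin.natAdd d j : Fin (d + e)) : ℕ) < d := by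
      simp only [Fin.coe_natAdd]; omega
    show (if h : _ then _ else _) = _
    rw [dif_neg hj]
    simp only [Fin.coe_natAdd, Nat.add_sub_cancel_left, Fin.eta]
  -- sum expansion for injections
  have hsv_sum : ∀ g : Fin d → Fin (d + e),
      ∑ j, sv (g j) j = (N : ℤ) + (∑ j, ((g j : ℕ) : ℤ)) - ((d * e + ∑ i ∈ Finset.range d, i : ℕ) : ℤ) := by
    intro g
    have h1 : ∀ j : Fin d, sv (g j) j
        = (lam j : ℤ) + ((g j : ℕ) : ℤ) - ((j : ℕ) : ℤ) - (e : ℤ) := by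
      intro j; simp only [hsv, hy]; ring
    rw [Finset.sum_congr rfl (fun j _ => h1 j)]
    have h2 : ∑ j : Fin d, (((j : ℕ) : ℤ)) = ((∑ i ∈ Finset.range d, i : ℕ) : ℤ) := by
      rw [Fin.sum_univ_eq_sum_range (fun i => (i : ℤ)) d]
      rw [Nat.cast_sum]
    have h3 : ((N : ℕ) : ℤ) = ∑ j : Fin d, ((lam j : ℤ)) := by
      rw [hN, Nat.cast_sum]
    rw [Finset.sum_sub_distrib, Finset.sum_sub_distrib, Finset.sum_add_distrib,
      Finset.sum_const, Finset.card_univ, Fintype.card_fin, h2, h3]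
    push_cast
    ring
  have hle : ∀ g : Fin d → Fin (d + e), Function.Injective g →
      ∑ j, sv (g j) j ≤ (N : ℤ) := by
    intro g hg
    have := sum_inj_upper g hg
    have hc : (∑ j, ((g j : ℕ) : ℤ)) ≤ ((d * e + ∑ i ∈ Finset.range d, i : ℕ) : ℤ) := by
      rw [← Nat.cast_sum]
      exact_mod_cast this
    rw [hsv_sum g]
    omega
  have hlt : ∀ g : Fin d → Fin (d + e), Function.Injective g →
      ∀ j0 : Fin d, (g j0 : ℕ) < e → ∑ j, sv (g j) j < (N : ℤ) := by
    intro g hg j0 hj0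
    have := sum_inj_strict g hg j0 hj0
    have hc : (∑ j, ((g j : ℕ) : ℤ)) < ((d * e + ∑ i ∈ Finset.range d, i : ℕ) : ℤ) := by
      rw [← Nat.cast_sum]
      exact_mod_cast this
    rw [hsv_sum g]
    omega
  have heq : ∀ g : Fin d → Fin (d + e), Function.Injective g →
      (∀ j : Fin d, e ≤ (g j : ℕ)) → ∑ j, sv (g j) j = (N : ℤ) := by
    intro g hg htop
    have := sum_inj_top g hg htop
    have hc : (∑ j, ((g j : ℕ) : ℤ)) = ((d * e + ∑ i ∈ Finset.range d, i : ℕ) : ℤ) := by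
      rw [← Nat.cast_sum]
      exact_mod_cast this
    rw [hsv_sum g]
    omega
  -- per-permutation facts
  have hginj : ∀ σ : Equiv.Perm (Fin (d + e)),
      Function.Injective (fun j : Fin d => σ (Fin.castAdd e j)) := by
    intro σ a b hab
    have := σ.injective hab
    exact Fin.castAdd_injective d e this
  -- if some entry in a "polynomial column" vanishes, the whole product vanishes
  have hprodzero : ∀ (σ : Equiv.Perm (Fin (d + e))) (j1 : Fin d),
      sv (σ (Fin.castAdd e j1)) j1 < 0 → ∏ i, A (σ i) i = 0 := by
    intro σ j1 hneg
    apply Finset.prod_eq_zero (Finset.mem_univ (Fin.castAdd e j1))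
    rw [hAcast, binomPoly_of_neg hneg]
  -- natDegree bound for the product, when all polynomial entries are "alive"
  have hdegT : ∀ (σ : Equiv.Perm (Fin (d + e))),
      (∀ j : Fin d, 0 ≤ sv (σ (Fin.castAdd e j)) j) →
      ((∏ i, A (σ i) i).natDegree : ℤ) ≤ ∑ j, sv (σ (Fin.castAdd e j)) j := by
    intro σ hpos
    have h1 : (∏ i, A (σ i) i).natDegree ≤ ∑ i, (A (σ i) i).natDegree :=
      Polynomial.natDegree_prod_le Finset.univ _
    have h2 : ∑ i, (A (σ i) i).natDegree
        = (∑ j : Fin d, (A (σ (Fin.castAdd e j)) (Fin.castAdd e j)).natDegree)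
          + ∑ j : Fin e, (A (σ (Fin.natAdd d j)) (Fin.natAdd d j)).natDegree :=
      Fin.sum_univ_add _
    have h3 : ∀ j : Fin e, (A (σ (Fin.natAdd d j)) (Fin.natAdd d j)).natDegree = 0 := by
      intro j; rw [hAnat]; exact Polynomial.natDegree_C _
    have h4 : ∀ j : Fin d, (A (σ (Fin.castAdd e j)) (Fin.castAdd e j)).natDegree
        ≤ (sv (σ (Fin.castAdd e j)) j).toNat := by
      intro j; rw [hAcast]; exact binomPoly_natDegree_le _ _
    have h5 : (∏ i, A (σ i) i).natDegree ≤ ∑ j : Fin d, (sv (σ (Fin.castAdd e j)) j).toNat := by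
      calc (∏ i, A (σ i) i).natDegree ≤ _ := h1
        _ = _ := h2
        _ ≤ (∑ j : Fin d, (sv (σ (Fin.castAdd e j)) j).toNat) + 0 :=
            add_le_add (Finset.sum_le_sum (fun j _ => h4 j))
              (le_of_eq (Finset.sum_eq_zero (fun j _ => h3 j)))
        _ = _ := add_zero _
    have h6 : ((∑ j : Fin d, (sv (σ (Fin.castAdd e j)) j).toNat : ℕ) : ℤ)
        = ∑ j, sv (σ (Fin.castAdd e j)) j := by
      rw [Nat.cast_sum]
      exact Finset.sum_congr rfl (fun j _ => Int.toNat_of_nonneg (hpos j))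
    calc ((∏ i, A (σ i) i).natDegree : ℤ) ≤ _ := by exact_mod_cast h5
      _ = _ := h6
  -- coefficients above N vanish
  have hcoeff_hi : ∀ (σ : Equiv.Perm (Fin (d + e))) (m : ℕ), N < m →
      (∏ i, A (σ i) i).coeff m = 0 := by
    intro σ m hm
    by_cases hpos : ∀ j : Fin d, 0 ≤ sv (σ (Fin.castAdd e j)) j
    · apply Polynomial.coeff_eq_zero_of_natDegree_lt
      have := le_trans (hdegT σ hpos) (hle _ (hginj σ))
      omega
    · push_neg at hpos
      obtain ⟨j1, hj1⟩ := hpos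
      rw [hprodzero σ j1 (by omega)]
      simp
  -- the "leading coefficient" matrix
  set Lm : Matrix (Fin (d + e)) (Fin (d + e)) ℚ := Matrix.of fun i j : Fin (d + e) =>
      if hj : (j : ℕ) < d then
        (if e ≤ (i : ℕ) then
          invFact ((lam ⟨j, hj⟩ : ℤ) - ((j : ℕ) + 1) - e + ((i : ℕ) + 1)) else 0)
      else
        ((Nat.choose (k + mu ⟨(j : ℕ) - d, by have := j.isLt; omega⟩ + e - ((j : ℕ) - d + 1))
          (k - 1 + ((i : ℕ) + 1)) : ℚ)) with hLm
  have hLcast : ∀ (i : Fin (d + e)) (j : Fin d),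
      Lm i (Fin.castAdd e j) = (if e ≤ (i : ℕ) then invFact (sv i j) else 0) := by
    intro i j
    have hj : ((Fin.castAdd e j : Fin (d + e)) : ℕ) < d := by
      simp only [Fin.coe_castAdd]; exact j.isLt
    show (if h : _ then _ else _) = _
    rw [dif_pos hj]
    simp only [Fin.coe_castAdd, Fin.eta, hsv, hy]
  have hLnat : ∀ (i : Fin (d + e)) (j : Fin e),
      Lm i (Fin.natAdd d j) =
        ((Nat.choose (k + mu j + e - ((j : ℕ) + 1)) (k - 1 + ((i : ℕ) + 1)) : ℚ)) := by
    intro i j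
    have hj : ¬ ((Fin.natAdd d j : Fin (d + e)) : ℕ) < d := by
      simp only [Fin.coe_natAdd]; omega
    show (if h : _ then _ else _) = _
    rw [dif_neg hj]
    simp only [Fin.coe_natAdd, Nat.add_sub_cancel_left, Fin.eta]
  -- the coefficient of X^N of each monomial term of the determinant
  have hcoeff_top : ∀ σ : Equiv.Perm (Fin (d + e)),
      (∏ i, A (σ i) i).coeff N = ∏ i, Lm (σ i) i := by
    intro σ
    by_cases htop : ∀ j : Fin d, e ≤ ((σ (Fin.castAdd e j)) : ℕ)
    · by_cases hpos : ∀ j : Fin d, 0 ≤ sv (σ (Fin.castAdd e j)) j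
      · -- main case : use budgets
        set nb : Fin (d + e) → ℕ := fun i =>
          if h : (i : ℕ) < d then (sv (σ i) ⟨(i : ℕ), h⟩).toNat else 0 with hnb
        have hnbc : ∀ j : Fin d, nb (Fin.castAdd e j) = (sv (σ (Fin.castAdd e j)) j).toNat := by
          intro j
          have hj : ((Fin.castAdd e j : Fin (d + e)) : ℕ) < d := by
            simp only [Fin.coe_castAdd]; exact j.isLt
          show (if h : _ then _ else _) = _
          rw [dif_pos hj]
          simp only [Fin.coe_castAdd, Fin.eta]
        have hnbn : ∀ j : Fin e, nb (Fin.natAdd d j) = 0 := by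
          intro j
          have hj : ¬ ((Fin.natAdd d j : Fin (d + e)) : ℕ) < d := by
            simp only [Fin.coe_natAdd]; omega
          show (if h : _ then _ else _) = _
          rw [dif_neg hj]
        have hsumnb : ∑ i, nb i = N := by
          have h1 : ∑ i, nb i = (∑ j : Fin d, nb (Fin.castAdd e j))
              + ∑ j : Fin e, nb (Fin.natAdd d j) := Fin.sum_univ_add _
          rw [h1, Finset.sum_eq_zero (fun j _ => hnbn j), add_zero,
            Finset.sum_congr rfl (fun j _ => hnbc j)]
          have h2 : ((∑ j : Fin d, (sv (σ (Fin.castAdd e j)) j).toNat : ℕ) : ℤ) = (N : ℤ) := by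
            rw [Nat.cast_sum, Finset.sum_congr rfl
              (fun j (_ : j ∈ Finset.univ) => Int.toNat_of_nonneg (hpos j))]
            exact heq _ (hginj σ) htop
          exact_mod_cast h2
        have hdegs : ∀ i ∈ Finset.univ, (A (σ i) i).natDegree ≤ nb i := by
          intro i _
          by_cases hi : (i : ℕ) < d
          · have hieq : i = Fin.castAdd e ⟨(i : ℕ), hi⟩ := by
              ext; simp [Fin.coe_castAdd]
            rw [hnb]
            simp only
            rw [dif_pos hi]
            conv_lhs => rw [hieq, hAcast]
            exact binomPoly_natDegree_le _ _
          · have hieq : i = Fin.natAdd d ⟨(i : ℕ) - d, by have := i.isLt; omega⟩ := by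
              ext; simp only [Fin.coe_natAdd]; omega
            rw [hnb]
            simp only
            rw [dif_neg hi]
            conv_lhs => rw [hieq, hAnat]
            exact le_of_eq (Polynomial.natDegree_C _)
        rw [← hsumnb, coeff_prod_budget Finset.univ _ nb hdegs]
        apply Finset.prod_congr rfl
        intro i _
        by_cases hi : (i : ℕ) < d
        · have hieq : i = Fin.castAdd e ⟨(i : ℕ), hi⟩ := by
            ext; simp [Fin.coe_castAdd]
          conv_lhs => rw [hieq, hAcast, hnbc ⟨(i : ℕ), hi⟩]
          conv_rhs => rw [hieq, hLcast]
          rw [binomPoly_coeff_toNat]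
          rw [if_pos (htop ⟨(i : ℕ), hi⟩)]
        · have hieq : i = Fin.natAdd d ⟨(i : ℕ) - d, by have := i.isLt; omega⟩ := by
            ext; simp only [Fin.coe_natAdd]; omega
          conv_lhs => rw [hieq, hAnat, hnbn]
          conv_rhs => rw [hieq, hLnat]
          rw [Polynomial.coeff_C_zero]
      · -- a dead polynomial entry : both sides vanish
        push_neg at hpos
        obtain ⟨j1, hj1⟩ := hpos
        rw [hprodzero σ j1 (by omega)]
        rw [Polynomial.coeff_zero]
        symm
        apply Finset.prod_eq_zero (Finset.mem_univ (Fin.castAdd e j1))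
        rw [hLcast, if_pos (htop j1), invFact_of_neg (by omega)]
    · -- not top-mapping : both sides vanish
      push_neg at htop
      obtain ⟨j0, hj0⟩ := htop
      have hrhs : ∏ i, Lm (σ i) i = 0 := by
        apply Finset.prod_eq_zero (Finset.mem_univ (Fin.castAdd e j0))
        rw [hLcast, if_neg (by omega)]
      rw [hrhs]
      by_cases hpos : ∀ j : Fin d, 0 ≤ sv (σ (Fin.castAdd e j)) j
      · apply Polynomial.coeff_eq_zero_of_natDegree_lt
        have h1 := hdegT σ hpos
        have h2 := hlt _ (hginj σ) j0 (by omega)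
        omega
      · push_neg at hpos
        obtain ⟨j1, hj1⟩ := hpos
        rw [hprodzero σ j1 (by omega)]
        simp
  -- determinant coefficient facts
  have hCcast : ∀ z : ℤ, ((z : ℤ) : Polynomial ℚ) = Polynomial.C ((z : ℤ) : ℚ) :=
    fun z => (map_intCast (Polynomial.C : ℚ →+* Polynomial ℚ) z).symm
  have hdetcoeff : (A.det).coeff N = Lm.det := by
    rw [Matrix.det_apply', Matrix.det_apply', Polynomial.finset_sum_coeff]
    apply Finset.sum_congr rfl
    intro σ _
    rw [hCcast, Polynomial.coeff_C_mul, hcoeff_top σ]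
  have hdeg_le : (A.det).natDegree ≤ N := by
    rw [Polynomial.natDegree_le_iff_coeff_eq_zero]
    intro m hm
    rw [Matrix.det_apply', Polynomial.finset_sum_coeff]
    apply Finset.sum_eq_zero
    intro σ _
    rw [hCcast, Polynomial.coeff_C_mul, hcoeff_hi σ m hm, mul_zero]
  -- block decomposition of Lm
  set B : Matrix (Fin d) (Fin d) ℚ :=
    Matrix.of fun i j : Fin d => invFact (((lam j : ℤ) - (j : ℕ)) + (i : ℕ)) with hB
  set Cm : Matrix (Fin e) (Fin e) ℚ :=
    Matrix.of fun i j : Fin e =>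
      ((Nat.choose (k + mu j + e - ((j : ℕ) + 1)) (k - 1 + ((i : ℕ) + 1)) : ℚ)) with hCm
  set Xm : Matrix (Fin d) (Fin e) ℚ :=
    Matrix.of fun m j =>
      ((Nat.choose (k + mu j + e - ((j : ℕ) + 1)) (k - 1 + ((e + (m : ℕ)) + 1)) : ℚ)) with hXm
  set rq : Fin d ⊕ Fin e ≃ Fin (d + e) :=
    (Equiv.sumComm (Fin d) (Fin e)).trans (finSumFinEquiv.trans (finCongr (Nat.add_comm e d)))
    with hrq
  set cq : Fin d ⊕ Fin e ≃ Fin (d + e) := finSumFinEquiv with hcq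
  have hrql : ∀ m : Fin d, ((rq (Sum.inl m) : Fin (d + e)) : ℕ) = e + (m : ℕ) := by
    intro m; simp [hrq]; omega
  have hrqr : ∀ i : Fin e, ((rq (Sum.inr i) : Fin (d + e)) : ℕ) = (i : ℕ) := by
    intro i; simp [hrq]
  have hcql : ∀ j : Fin d, cq (Sum.inl j) = Fin.castAdd e j := by
    intro j; simp [hcq, finSumFinEquiv]
  have hcqr : ∀ j : Fin e, cq (Sum.inr j) = Fin.natAdd d j := by
    intro j; simp [hcq, finSumFinEquiv]
  have hblock : Lm.submatrix rq cq = Matrix.fromBlocks B Xm 0 Cm := by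
    ext i j
    rcases i with m | i <;> rcases j with j | j
    · rw [Matrix.submatrix_apply, hcql, hLcast, if_pos (by rw [hrql]; omega)]
      rw [Matrix.fromBlocks_apply₁₁]
      rw [hB]
      simp only [Matrix.of_apply]
      congr 1
      simp only [hsv, hy, hrql]
      push_cast
      ring
    · rw [Matrix.submatrix_apply, hcqr, hLnat]
      rw [Matrix.fromBlocks_apply₁₂]
      rw [hXm]
      simp only [Matrix.of_apply]
      rw [hrql]
    · rw [Matrix.submatrix_apply, hcql, hLcast, if_neg (by rw [hrqr]; have := i.isLt; omega)]
      simp [Matrix.fromBlocks_apply₂₁]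
    · rw [Matrix.submatrix_apply, hcqr, hLnat]
      rw [Matrix.fromBlocks_apply₂₂]
      rw [hCm]
      simp only [Matrix.of_apply]
      rw [hrqr]
  -- determinant of Lm via blocks
  set piq : Equiv.Perm (Fin d ⊕ Fin e) := rq.trans cq.symm with hpiq
  have hcomp : (Lm.submatrix ⇑cq ⇑cq).submatrix ⇑piq id = Lm.submatrix ⇑rq ⇑cq := by
    ext i j
    simp [Matrix.submatrix_apply, hpiq]
  have hdl : ((Lm.submatrix ⇑cq ⇑cq).submatrix ⇑piq id).det
      = ((Equiv.Perm.sign piq : ℤ) : ℚ) * Lm.det := by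
    rw [show ((Lm.submatrix ⇑cq ⇑cq).submatrix ⇑piq id).det
        = ((Equiv.Perm.sign piq : ℤ) : ℚ) * (Lm.submatrix ⇑cq ⇑cq).det from by
      exact_mod_cast Matrix.det_permute piq _]
    rw [Matrix.det_submatrix_equiv_self]
  have hkey : B.det * Cm.det = ((Equiv.Perm.sign piq : ℤ) : ℚ) * Lm.det := by
    rw [← hdl, hcomp]
    rw [show (Lm.submatrix ⇑rq ⇑cq).det = (Matrix.fromBlocks B Xm 0 Cm).det from by rw [hblock]]
    rw [Matrix.det_fromBlocks_zero₂₁]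
  -- B has nonzero determinant
  have hBne : B.det ≠ 0 := by
    apply det_invFact_ne_zero d (fun j => (lam j : ℤ) - ((j : ℕ) : ℤ))
    · intro a b hab
      simp only at hab
      rcases le_total a b with h | h
      · have h2 := hlam h
        have h3 : (a : ℕ) ≤ (b : ℕ) := h
        exact Fin.ext (by omega)
      · have h2 := hlam h
        have h3 : (b : ℕ) ≤ (a : ℕ) := h
        exact Fin.ext (by omega)
    · intro j
      have := j.isLt
      omega
  -- Cm has nonzero determinant
  set bv : Fin e → ℕ := fun j => k + mu j + e - ((j : ℕ) + 1) with hbvdef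
  have hbv : ∀ j : Fin e, ((bv j : ℕ) : ℤ) = (k : ℤ) + (mu j : ℤ) + (e : ℤ) - (((j : ℕ) : ℤ) + 1) := by
    intro j
    have h1 := j.isLt
    simp only [hbvdef]
    omega
  have hk1 : ∀ i : ℕ, k - 1 + (i + 1) = k + i := by intro i; omega
  set D : Matrix (Fin e) (Fin e) ℚ :=
    Matrix.of fun i j : Fin e => invFact ((bv j : ℤ) - ((k : ℤ) + ((i : ℕ) : ℤ))) with hD
  have step1 : ∀ i j : Fin e, Cm i j
      = ((bv j).factorial : ℚ) * (((k + (i : ℕ)).factorial : ℚ))⁻¹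
        * invFact ((bv j : ℤ) - ((k : ℤ) + ((i : ℕ) : ℤ))) := by
    intro i j
    rw [hCm]
    simp only [Matrix.of_apply]
    rw [show k + mu j + e - ((j : ℕ) + 1) = bv j from rfl, hk1]
    by_cases h : k + (i : ℕ) ≤ bv j
    · rw [Nat.cast_choose ℚ h]
      have harg : (0 : ℤ) ≤ (bv j : ℤ) - ((k : ℤ) + ((i : ℕ) : ℤ)) := by omega
      have htn : ((bv j : ℤ) - ((k : ℤ) + ((i : ℕ) : ℤ))).toNat = bv j - (k + (i : ℕ)) := by omega
      rw [invFact, if_pos harg, htn]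
      rw [div_eq_mul_inv, mul_inv]
      ring
    · rw [Nat.choose_eq_zero_of_lt (by omega), invFact_of_neg (by omega), mul_zero, Nat.cast_zero]
  have hCfact : Cm = Matrix.diagonal (fun i : Fin e => (((k + (i : ℕ)).factorial : ℚ))⁻¹)
      * D * Matrix.diagonal (fun j : Fin e => ((bv j).factorial : ℚ)) := by
    ext i j
    rw [Matrix.mul_diagonal, Matrix.diagonal_mul]
    rw [step1 i j, hD]
    simp only [Matrix.of_apply]
    ring
  have hDne : D.det ≠ 0 := by
    set w' : Fin e → ℤ := fun j => (bv j : ℤ) - (k : ℤ) - (e : ℤ) + 1 with hw'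
    have hw'j : ∀ j : Fin e, w' j = (bv j : ℤ) - (k : ℤ) - (e : ℤ) + 1 := fun j => rfl
    have hrev : D.submatrix ⇑(Fin.revPerm : Equiv.Perm (Fin e)) id
        = Matrix.of fun i j : Fin e => invFact (w' j + ((i : ℕ) : ℤ)) := by
      ext i j
      simp only [Matrix.submatrix_apply, Matrix.of_apply, id_eq, Fin.revPerm_apply]
      rw [hD]
      simp only [Matrix.of_apply]
      congr 1
      have h1 : ((Fin.rev i : Fin e) : ℕ) = e - ((i : ℕ) + 1) := Fin.val_rev i
      have h2 := i.isLt
      rw [h1, hw'j j]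
      omega
    have hwne := det_invFact_ne_zero e w' (by
      intro a b hab
      rw [hw'j, hw'j] at hab
      have ha := hbv a
      have hb := hbv b
      rcases le_total a b with h | h
      · have h2 := hmu h
        have h3 : (a : ℕ) ≤ (b : ℕ) := h
        exact Fin.ext (by omega)
      · have h2 := hmu h
        have h3 : (b : ℕ) ≤ (a : ℕ) := h
        exact Fin.ext (by omega)) (by
      intro j
      have h1 := hbv j
      have h2 := j.isLt
      rw [hw'j]
      omega)
    intro h0
    rw [← hrev] at hwne
    apply hwne
    rw [show (D.submatrix ⇑(Fin.revPerm : Equiv.Perm (Fin e)) id).det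
        = ((Equiv.Perm.sign (Fin.revPerm : Equiv.Perm (Fin e)) : ℤ) : ℚ) * D.det from by
      exact_mod_cast Matrix.det_permute _ _]
    rw [h0, mul_zero]
  have hCne : Cm.det ≠ 0 := by
    rw [hCfact, Matrix.det_mul, Matrix.det_mul, Matrix.det_diagonal, Matrix.det_diagonal]
    apply mul_ne_zero
    apply mul_ne_zero
    · apply Finset.prod_ne_zero_iff.mpr
      intro i _
      exact inv_ne_zero (by positivity)
    · exact hDne
    · apply Finset.prod_ne_zero_iff.mpr
      intro j _
      positivity
  have hLmne : Lm.det ≠ 0 := by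
    intro h0
    rw [h0, mul_zero] at hkey
    exact mul_ne_zero hBne hCne hkey
  -- the determinant has degree exactly N
  have hdeg : (A.det).natDegree = N := by
    refine le_antisymm hdeg_le ?_
    apply Polynomial.le_natDegree_of_ne_zero
    rw [hdetcoeff]
    exact hLmne
  -- integrality : N! * det A is the image of an integer polynomial
  set RH : Polynomial ℤ →+* Polynomial ℚ := Polynomial.mapRingHom (Int.castRingHom ℚ) with hRH
  have hCfactmem : ∀ (c : ℤ) (s : ℤ), 0 ≤ s →
      Polynomial.C (((s.toNat).factorial : ℚ)) * binomPoly c s ∈ RH.range := by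
    intro c s hs
    rw [binomPoly, if_pos hs, ← mul_assoc, ← Polynomial.C_mul,
      mul_inv_cancel₀ (by positivity : ((s.toNat).factorial : ℚ) ≠ 0), Polynomial.C_1, one_mul]
    refine ⟨∏ t ∈ Finset.range s.toNat, (Polynomial.X + Polynomial.C (c - (t : ℤ))), ?_⟩
    rw [hRH]
    simp only [Polynomial.coe_mapRingHom]
    rw [Polynomial.map_prod]
    apply Finset.prod_congr rfl
    intro t _
    rw [Polynomial.map_add, Polynomial.map_X, Polynomial.map_C]
    congr 1
    simp
  have hconstmem : ∀ q : ℕ, Polynomial.C ((q : ℚ)) ∈ RH.range := by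
    intro q
    rw [map_natCast (Polynomial.C : ℚ →+* Polynomial ℚ) q]
    exact natCast_mem _ q
  have hmem : Polynomial.C ((N.factorial : ℚ)) * A.det ∈ RH.range := by
    rw [Matrix.det_apply', Finset.mul_sum]
    apply Subring.sum_mem
    intro σ _
    rw [show Polynomial.C ((N.factorial : ℚ)) * (((Equiv.Perm.sign σ : ℤ) : Polynomial ℚ)
        * ∏ i, A (σ i) i)
      = ((Equiv.Perm.sign σ : ℤ) : Polynomial ℚ)
        * (Polynomial.C ((N.factorial : ℚ)) * ∏ i, A (σ i) i) from by ring]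
    apply Subring.mul_mem _ (intCast_mem _ _)
    by_cases hpos : ∀ j : Fin d, 0 ≤ sv (σ (Fin.castAdd e j)) j
    · -- divisibility of factorials
      set t : Fin d → ℕ := fun j => (sv (σ (Fin.castAdd e j)) j).toNat with ht
      have hT : ∑ j, t j ≤ N := by
        have h1 : ((∑ j, t j : ℕ) : ℤ) ≤ (N : ℤ) := by
          rw [Nat.cast_sum]
          calc ∑ j : Fin d, ((t j : ℕ) : ℤ)
              = ∑ j, sv (σ (Fin.castAdd e j)) j :=
                Finset.sum_congr rfl (fun j _ => Int.toNat_of_nonneg (hpos j))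
            _ ≤ (N : ℤ) := hle _ (hginj σ)
        exact_mod_cast h1
      obtain ⟨m, hm⟩ := dvd_trans (Nat.prod_factorial_dvd_factorial_sum Finset.univ t)
        (Nat.factorial_dvd_factorial hT)
      have hNfac : ((N.factorial : ℕ) : ℚ) = (∏ j, ((t j).factorial : ℚ)) * (m : ℚ) := by
        rw [hm]
        push_cast
        ring
      rw [Fin.prod_univ_add, hNfac]
      have hmain : ∀ j : Fin d,
          Polynomial.C (((t j).factorial : ℚ)) * A (σ (Fin.castAdd e j)) (Fin.castAdd e j)
            ∈ RH.range := by
        intro j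
        rw [hAcast]
        exact hCfactmem (y j + d) (sv (σ (Fin.castAdd e j)) j) (hpos j)
      have hrearr : Polynomial.C ((∏ j : Fin d, ((t j).factorial : ℚ)) * (m : ℚ))
            * ((∏ i : Fin d, A (σ (Fin.castAdd e i)) (Fin.castAdd e i))
              * ∏ i : Fin e, A (σ (Fin.natAdd d i)) (Fin.natAdd d i))
          = Polynomial.C ((m : ℚ))
            * ((∏ j : Fin d, Polynomial.C (((t j).factorial : ℚ)))
                * ∏ i : Fin d, A (σ (Fin.castAdd e i)) (Fin.castAdd e i))
            * ∏ i : Fin e, A (σ (Fin.natAdd d i)) (Fin.natAdd d i) := by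
        rw [map_mul, map_prod]
        ring
      rw [hrearr, ← Finset.prod_mul_distrib]
      apply Subring.mul_mem
      · apply Subring.mul_mem _ (hconstmem m)
        exact Subring.prod_mem _ (fun j _ => hmain j)
      · apply Subring.prod_mem
        intro j _
        rw [hAnat]
        exact hconstmem _
    · push_neg at hpos
      obtain ⟨j1, hj1⟩ := hpos
      rw [hprodzero σ j1 (by omega), mul_zero]
      exact Subring.zero_mem _
  -- conclusion
  obtain ⟨p, hp⟩ := hmem
  refine ⟨p, ?_, ?_⟩
  · have h1 : (p.map (Int.castRingHom ℚ)).natDegree = p.natDegree :=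
      Polynomial.natDegree_map_eq_of_injective
        (by simpa using (Int.cast_injective : Function.Injective (Int.cast : ℤ → ℚ))) p
    have h2 : RH p = p.map (Int.castRingHom ℚ) := rfl
    have h3 : (Polynomial.C ((N.factorial : ℚ)) * A.det).natDegree = A.det.natDegree :=
      Polynomial.natDegree_C_mul (by positivity)
    rw [← h1, ← h2, hp, h3, hdeg]
  · have h2 : p.map (Int.castRingHom ℚ) = RH p := rfl
    rw [h2, hp, ← mul_assoc, ← Polynomial.C_mul,
      inv_mul_cancel₀ (by positivity : ((N.factorial : ℚ)) ≠ 0), Polynomial.C_1, one_mul]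
end

section
/- Let λ be a partition with at most d parts, all parts at most d, and let σ be a permutation of {1,…,d+e} with λ_j − j − e + σ(j) ≥ 0 for all 1 ≤ j ≤ d. Set L = Σ_{j=1}^{d}(j + e − σ(j)), and suppose L ≥ 0. Then |λ|!·∏_{j=1}^{d} binom(λ_j − j + h + d, λ_j − j − e + σ(j)) = L!·multinom(|λ|; λ_1−1−e+σ(1), …, λ_d−d−e+σ(d), L)·∏_{j=1}^{d}(h + d + e − σ(j) + 1)_{λ_j − j − e + σ(j)}, where (α)_s = α(α+1)⋯(α+s−1) is the Pochhammer symbol; in particular the left-hand side is a polynomial in h with integer coefficients. -/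
open Polynomial

/-- The lower index `N_j = λ_j − j − e + σ(j)` (1-indexed `j`). -/
def lowIdx (d e : ℕ) (lam : Fin d → ℕ) (σ : Equiv.Perm (Fin (d + e))) (j : Fin d) : ℤ :=
  (lam j : ℤ) - ((j : ℕ) + 1) - e + ((σ (Fin.castAdd e j) : ℕ) + 1)

/-- `L = Σ_{j=1}^{d} (j + e − σ(j))`. -/
def Lsum (d e : ℕ) (σ : Equiv.Perm (Fin (d + e))) : ℤ :=
  ∑ j : Fin d, ((((j : ℕ) : ℤ) + 1) + e - ((σ (Fin.castAdd e j) : ℕ) + 1))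

/-- The Pochhammer factor `(h + d + e − σ(j) + 1)_{N_j}` as a polynomial in `h`. -/
noncomputable def pochFactor (d e : ℕ) (lam : Fin d → ℕ)
    (σ : Equiv.Perm (Fin (d + e))) (j : Fin d) : Polynomial ℚ :=
  ∏ t ∈ Finset.range (lowIdx d e lam σ j).toNat,
    (Polynomial.X + Polynomial.C ((d : ℚ) + e - (((σ (Fin.castAdd e j) : ℕ) : ℚ) + 1) + 1 + t))

/-- Equation (5.3) of the paper: with `N_j = λ_j − j − e + σ(j) ≥ 0` and
`L = Σ_{j=1}^{d}(j + e − σ(j)) ≥ 0`, one has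
`|λ|!·∏_j binom(λ_j − j + h + d, N_j)
  = L!·multinom(|λ|; N_1,…,N_d, L)·∏_j (h + d + e − σ(j) + 1)_{N_j}`;
in particular the left-hand side is a polynomial in `h` with integer
coefficients. -/
theorem stmt11 (d e : ℕ) (lam : Fin d → ℕ)
    (hlam : Antitone lam) (hlamle : ∀ j, lam j ≤ d)
    (σ : Equiv.Perm (Fin (d + e)))
    (hnn : ∀ j : Fin d, 0 ≤ lowIdx d e lam σ j)
    (hL : 0 ≤ Lsum d e σ) :
    (Polynomial.C (((∑ j, lam j).factorial : ℚ)) *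
        ∏ j : Fin d, binomPoly ((lam j : ℤ) - ((j : ℕ) + 1) + d) (lowIdx d e lam σ j)
      = Polynomial.C (((Lsum d e σ).toNat.factorial : ℚ)) *
        Polynomial.C
          ((((∑ j, lam j).factorial /
              ((∏ j : Fin d, (lowIdx d e lam σ j).toNat.factorial) *
                (Lsum d e σ).toNat.factorial)) : ℕ) : ℚ) *
        ∏ j : Fin d, pochFactor d e lam σ j) ∧
    ∃ q : Polynomial ℤ,
      Polynomial.C (((∑ j, lam j).factorial : ℚ)) *
          ∏ j : Fin d, binomPoly ((lam j : ℤ) - ((j : ℕ) + 1) + d) (lowIdx d e lam σ j)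
        = q.map (Int.castRingHom ℚ) := by
  classical
  set N : Fin d → ℕ := fun j => (lowIdx d e lam σ j).toNat with hNdef
  have hNcast : ∀ j, ((N j : ℤ)) = lowIdx d e lam σ j := fun j => Int.toNat_of_nonneg (hnn j)
  set L' : ℕ := (Lsum d e σ).toNat with hL'def
  have hLcast : ((L' : ℤ)) = Lsum d e σ := Int.toNat_of_nonneg hL
  -- each binomial factor equals (1/N_j!) times the Pochhammer factor
  have hbin : ∀ j : Fin d,
      binomPoly ((lam j : ℤ) - ((j : ℕ) + 1) + d) (lowIdx d e lam σ j)
        = Polynomial.C (((N j).factorial : ℚ))⁻¹ * pochFactor d e lam σ j := by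
    intro j
    rw [binomPoly, if_pos (hnn j), pochFactor]
    congr 1
    rw [← Finset.prod_range_reflect]
    apply Finset.prod_congr rfl
    intro t ht
    simp only [Finset.mem_range] at ht
    have ht2 : t < N j := ht
    congr 1
    have hNq : ((N j : ℚ)) = (lam j : ℚ) - ((j : ℕ) + 1) - e + ((σ (Fin.castAdd e j) : ℕ) + 1) := by
      have := hNcast j
      rw [lowIdx] at this
      exact_mod_cast this
    have hsub : (((N j) - 1 - t : ℕ) : ℚ) = (N j : ℚ) - 1 - t := by
      have h1 : 1 + t ≤ N j := by omega
      rw [Nat.sub_sub, Nat.cast_sub h1]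
      push_cast
      ring
    rw [hsub, hNq]
    push_cast
    ring
  -- LHS = C (|λ|! * (∏ N_j!)⁻¹) * ∏ pochFactor
  have hLHS : Polynomial.C (((∑ j, lam j).factorial : ℚ)) *
        ∏ j : Fin d, binomPoly ((lam j : ℤ) - ((j : ℕ) + 1) + d) (lowIdx d e lam σ j)
      = Polynomial.C (((∑ j, lam j).factorial : ℚ) * (∏ j : Fin d, ((N j).factorial : ℚ))⁻¹) *
        ∏ j : Fin d, pochFactor d e lam σ j := by
    rw [Finset.prod_congr rfl (fun j _ => hbin j), Finset.prod_mul_distrib,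
      ← Finset.prod_inv_distrib, map_mul, map_prod]
    ring
  -- sum identity
  have hsum : (∑ j, N j) + L' = ∑ j, lam j := by
    have : ((∑ j, N j : ℕ) : ℤ) + ((L' : ℕ) : ℤ) = ((∑ j, lam j : ℕ) : ℤ) := by
      push_cast
      rw [Finset.sum_congr rfl (fun j _ => hNcast j), hLcast, Lsum, ← Finset.sum_add_distrib]
      apply Finset.sum_congr rfl
      intro j _
      rw [lowIdx]; ring
    exact_mod_cast this
  -- divisibilities
  have hdvd1 : (∏ j : Fin d, (N j).factorial) ∣ (∑ j, N j).factorial :=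
    Nat.prod_factorial_dvd_factorial_sum _ _
  have hdvd2 : (∏ j : Fin d, (N j).factorial) * L'.factorial ∣ (∑ j, lam j).factorial := by
    rw [← hsum]
    exact dvd_trans (mul_dvd_mul hdvd1 dvd_rfl)
      (Nat.factorial_mul_factorial_dvd_factorial_add _ _)
  have hdvd3 : (∏ j : Fin d, (N j).factorial) ∣ (∑ j, lam j).factorial :=
    dvd_trans (Dvd.intro _ rfl) hdvd2
  have hne1 : (∏ j : Fin d, (N j).factorial) ≠ 0 := by positivity
  have hne2 : (∏ j : Fin d, (N j).factorial) * L'.factorial ≠ 0 := by positivity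
  have hneq1 : ((∏ j : Fin d, (N j).factorial : ℕ) : ℚ) ≠ 0 := Nat.cast_ne_zero.mpr hne1
  have hneq2 : (((∏ j : Fin d, (N j).factorial) * L'.factorial : ℕ) : ℚ) ≠ 0 :=
    Nat.cast_ne_zero.mpr hne2
  have hneq3 : ((L'.factorial : ℕ) : ℚ) ≠ 0 := Nat.cast_ne_zero.mpr (Nat.factorial_ne_zero _)
  refine ⟨?_, ?_⟩
  · -- main identity
    have hscal : ((∑ j, lam j).factorial : ℚ) * (∏ j : Fin d, ((N j).factorial : ℚ))⁻¹
        = (L'.factorial : ℚ) *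
          ((((∑ j, lam j).factorial /
              ((∏ j : Fin d, (N j).factorial) * L'.factorial)) : ℕ) : ℚ) := by
      rw [Nat.cast_div hdvd2 hneq2]
      push_cast
      rw [div_eq_mul_inv, mul_inv]
      field_simp
    have hC : Polynomial.C (((∑ j, lam j).factorial : ℚ) *
          (∏ j : Fin d, ((N j).factorial : ℚ))⁻¹)
        = Polynomial.C ((L'.factorial : ℚ)) *
          Polynomial.C ((((∑ j, lam j).factorial /
              ((∏ j : Fin d, (N j).factorial) * L'.factorial)) : ℕ) : ℚ) := by
      rw [← map_mul]
      exact congrArg _ hscal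
    rw [hLHS, hC]
  · refine ⟨Polynomial.C ((((∑ j, lam j).factorial / (∏ j : Fin d, (N j).factorial)) : ℕ) : ℤ) *
      ∏ j : Fin d, ∏ t ∈ Finset.range (N j),
        (Polynomial.X + Polynomial.C ((d : ℤ) + e - (((σ (Fin.castAdd e j) : ℕ) : ℤ) + 1) + 1 + t)), ?_⟩
    rw [hLHS, Polynomial.map_mul, Polynomial.map_C]
    congr 1
    · congr 1
      rw [map_natCast, Nat.cast_div hdvd3 hneq1]
      push_cast
      rw [div_eq_mul_inv]
    · rw [Polynomial.map_prod]
      apply Finset.prod_congr rfl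
      intro j _
      rw [pochFactor, Polynomial.map_prod]
      apply Finset.prod_congr rfl
      intro t _
      rw [Polynomial.map_add, Polynomial.map_X, Polynomial.map_C]
      congr 1
      rw [eq_intCast]
      push_cast
      ring
end
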